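/- arXiv:2511.12333 — 3 statements merged into one kernel-verified Lean document; each statement's English description precedes it below -/
import Mathlib

section
/- The sum of an independent uniform random variable on [−a, a] (a > 0) and a non-degenerate centered Gaussian random variable (σ² > 0) is not uniformly distributed on any interval [−a', a']. -/
/-!
A uniform law on `[-a', a']` gives no mass to `(a', ∞)`. But `X ≥ -a` almost surely, and the
Gaussian `Y` charges every half-line, so by independence
`P(X + Y > a') ≥ P(X ≥ -a) · P(Y > a' + a) = P(Y > a' + a) > 0`.
-/

open MeasureTheory ProbabilityTheory Real
open scoped NNReal

/-- The uniform distribution on the interval `[-a, a]`, given by the density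
`(2a)⁻¹` on `[-a, a]` with respect to Lebesgue measure. -/
noncomputable def uniformSymmMeasure (a : ℝ) : Measure ℝ :=
  volume.withDensity fun x =>
    Set.indicator (Set.Icc (-a) a) (fun _ => ENNReal.ofReal (1 / (2 * a))) x

lemma uniformSymmMeasure_compl_Icc (a : ℝ) : uniformSymmMeasure a (Set.Icc (-a) a)ᶜ = 0 := by
  rw [uniformSymmMeasure, withDensity_apply _ measurableSet_Icc.compl,
    setLIntegral_congr_fun measurableSet_Icc.compl fun x hx => Set.indicator_of_notMem hx _]
  exact lintegral_zero

lemma uniformSymmMeasure_Ioi (a : ℝ) : uniformSymmMeasure a (Set.Ioi a) = 0 :=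
  measure_mono_null (fun _ hx hx' => not_le.mpr hx hx'.2 : Set.Ioi a ⊆ (Set.Icc (-a) a)ᶜ)
    (uniformSymmMeasure_compl_Icc a)

lemma uniformSymmMeasure_Iio_neg (a : ℝ) : uniformSymmMeasure a (Set.Iio (-a)) = 0 :=
  measure_mono_null (fun _ hx hx' => not_le.mpr hx hx'.1 : Set.Iio (-a) ⊆ (Set.Icc (-a) a)ᶜ)
    (uniformSymmMeasure_compl_Icc a)

lemma gaussianReal_pos_of_volume_pos (m : ℝ) {v : ℝ≥0} (hv : v ≠ 0) {s : Set ℝ}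
    (hs : 0 < volume s) : 0 < gaussianReal m v s :=
  pos_iff_ne_zero.mpr fun h => hs.ne' (gaussianReal_absolutelyContinuous' m hv h)

lemma gaussianReal_Ioi_pos (m : ℝ) {v : ℝ≥0} (hv : v ≠ 0) (c : ℝ) :
    0 < gaussianReal m v (Set.Ioi c) :=
  gaussianReal_pos_of_volume_pos m hv (isOpen_Ioi.measure_pos volume Set.nonempty_Ioi)

lemma ProbabilityTheory.IndepFun.map_Ici_mul_map_Ioi_le_map_add_Ioi
    {Ω : Type*} [MeasurableSpace Ω] {μ : Measure Ω} {X Y : Ω → ℝ}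
    (hMX : Measurable X) (hMY : Measurable Y) (hindep : IndepFun X Y μ) (c t : ℝ) :
    μ.map X (Set.Ici c) * μ.map Y (Set.Ioi (t - c)) ≤
      μ.map (fun ω => X ω + Y ω) (Set.Ioi t) := by
  rw [Measure.map_apply hMX measurableSet_Ici, Measure.map_apply hMY measurableSet_Ioi,
    Measure.map_apply (f := fun ω => X ω + Y ω) (hMX.add hMY) measurableSet_Ioi,
    ← hindep.measure_inter_preimage_eq_mul _ _ measurableSet_Ici measurableSet_Ioi]
  refine measure_mono fun ω ⟨hX, hY⟩ => ?_
  simp only [Set.mem_preimage, Set.mem_Ici, Set.mem_Ioi] at hX hY ⊢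
  linarith

theorem stmt_5_general {Ω : Type*} [MeasurableSpace Ω] (μ : Measure Ω) [IsProbabilityMeasure μ]
    (X Y : Ω → ℝ) (hMX : Measurable X) (hMY : Measurable Y)
    (hindep : IndepFun X Y μ)
    (a : ℝ) (v : ℝ≥0) (hv : 0 < v)
    (hX : μ.map X = uniformSymmMeasure a)
    (hY : μ.map Y = gaussianReal 0 v) :
    ∀ a' : ℝ, μ.map (fun ω => X ω + Y ω) ≠ uniformSymmMeasure a' := by
  intro a' hsum
  have : IsProbabilityMeasure (μ.map X) := Measure.isProbabilityMeasure_map hMX.aemeasurable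
  have hX_ge : μ.map X (Set.Ici (-a)) = 1 := by
    rw [← prob_compl_eq_zero_iff measurableSet_Ici, Set.compl_Ici, hX]
    exact uniformSymmMeasure_Iio_neg a
  have hpos : 0 < μ.map (fun ω => X ω + Y ω) (Set.Ioi a') :=
    calc 0 < μ.map Y (Set.Ioi (a' - -a)) := hY ▸ gaussianReal_Ioi_pos 0 hv.ne' _
      _ = μ.map X (Set.Ici (-a)) * μ.map Y (Set.Ioi (a' - -a)) := by rw [hX_ge, one_mul]
      _ ≤ _ := hindep.map_Ici_mul_map_Ioi_le_map_add_Ioi hMX hMY _ _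
  exact hpos.ne' (hsum ▸ uniformSymmMeasure_Ioi a')

/-- The sum of an independent uniform random variable on `[−a, a]` (`a > 0`) and a
non-degenerate centered Gaussian random variable (variance `v > 0`) is not uniformly
distributed on any interval `[−a', a']`. -/
theorem stmt_5 {Ω : Type*} [MeasurableSpace Ω] (μ : Measure Ω) [IsProbabilityMeasure μ]
    (X Y : Ω → ℝ) (hMX : Measurable X) (hMY : Measurable Y)
    (hindep : IndepFun X Y μ)
    (a : ℝ) (ha : 0 < a) (v : ℝ≥0) (hv : 0 < v)
    (hX : μ.map X = uniformSymmMeasure a)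
    (hY : μ.map Y = gaussianReal 0 v) :
    ∀ a' : ℝ, μ.map (fun ω => X ω + Y ω) ≠ uniformSymmMeasure a' :=
  stmt_5_general μ X Y hMX hMY hindep a v hv hX hY
end

section
/- Let L be the 5 × 2 matrix with first column (L₁₁, L₂₁, L₃₁, 0, 0)ᵀ and second column (0, 0, 0, L₄₂, L₅₂)ᵀ, where all listed entries are nonzero. Then for every 2 × 2 orthogonal matrix R, the product L R is not in positive-lower-triangular (PLT) form; i.e., it is impossible that (LR)₁₂ = 0 and (LR)₂₂ ≠ 0 simultaneously. -/
open Matrix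

/-- Let `L` be the 5 × 2 matrix with first column `(L₁₁, L₂₁, L₃₁, 0, 0)ᵀ` and second
column `(0, 0, 0, L₄₂, L₅₂)ᵀ`, where all listed entries are nonzero. Then for every 2 × 2
orthogonal matrix `R`, the product `L * R` is not in positive-lower-triangular (PLT) form,
i.e., it is impossible that `(L * R) 0 1 = 0` and `(L * R) 1 1 ≠ 0` simultaneously. -/
theorem stmt_9 (L : Matrix (Fin 5) (Fin 2) ℝ)
    (h12 : L 0 1 = 0) (h22 : L 1 1 = 0) (h32 : L 2 1 = 0)
    (h41 : L 3 0 = 0) (h51 : L 4 0 = 0)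
    (h11 : L 0 0 ≠ 0) (h21 : L 1 0 ≠ 0) (h31 : L 2 0 ≠ 0)
    (h42 : L 3 1 ≠ 0) (h52 : L 4 1 ≠ 0) :
    ∀ R : Matrix (Fin 2) (Fin 2) ℝ, R * Rᵀ = 1 →
      ¬((L * R) 0 1 = 0 ∧ (L * R) 1 1 ≠ 0) := by
  rintro R hR ⟨hA, hB⟩
  simp only [Matrix.mul_apply, Fin.sum_univ_two, h12, h22, zero_mul, add_zero] at hA hB
  have : R 0 1 = 0 := by
    rcases mul_eq_zero.mp hA with h | h
    · exact absurd h h11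
    · exact h
  rw [this, mul_zero] at hB
  exact hB rfl
end

section
/- Suppose L and L̃ are Q × P matrices of full column rank with unordered generalized lower triangular (UGLT) structures, and suppose L Lᵀ = L̃ L̃ᵀ. Then there exist a P × P permutation matrix P_per and a diagonal sign matrix P_sign (diagonal entries ±1) such that L̃ = L P_per P_sign. -/
/-!
Since `L` and `L'` have full column rank and `L * Lᵀ = L' * L'ᵀ`, we have `L' = L * M` for an
orthogonal `M`, and then also `L = L' * Mᵀ`. Reading off pivots in both identities, a nonzero
entry `M i j` forces column `i` of `L` and column `j` of `L'` to have the same pivot row. As pivot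
rows are distinct, every row of `M` has exactly one nonzero entry, so `M` is a permutation matrix
times a diagonal matrix, and orthogonality makes the diagonal entries `±1`.
-/

open Matrix

/-- A `Q × P` matrix `L` has an unordered generalized lower triangular (UGLT) structure if
each column `p` has a pivot row `ℓ p` (the first row with a nonzero entry in column `p`),
and the pivot rows are pairwise distinct. -/
def IsUGLT {Q P : ℕ} (L : Matrix (Fin Q) (Fin P) ℝ) : Prop :=
  ∃ ℓ : Fin P → Fin Q, Function.Injective ℓ ∧
    ∀ p : Fin P, L (ℓ p) p ≠ 0 ∧ ∀ q : Fin Q, q < ℓ p → L q p = 0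

namespace Matrix

variable {m n o K : Type*} [Fintype n]

theorem isUnit_of_rank_eq_card [DecidableEq n] [Field K] {A : Matrix n n K}
    (h : A.rank = Fintype.card n) : IsUnit A := by
  rw [← mulVec_surjective_iff_isUnit, ← coe_mulVecLin, ← LinearMap.range_eq_top]
  exact Submodule.eq_top_of_finrank_eq (by simpa [rank] using h)

section FullColumnRank

variable [DecidableEq n] [Fintype m] [Field K] [LinearOrder K] [IsStrictOrderedRing K]
  {L L' : Matrix m n K}

theorem mul_left_cancel_of_rank_eq_card (hL : L.rank = Fintype.card n) {A B : Matrix n o K}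
    (h : L * A = L * B) : A = B := by
  have hG : IsUnit (Lᵀ * L).det := (isUnit_iff_isUnit_det _).mp <|
    isUnit_of_rank_eq_card (by rw [rank_transpose_mul_self, hL])
  calc A = (Lᵀ * L)⁻¹ * (Lᵀ * (L * A)) := by
        rw [← Matrix.mul_assoc Lᵀ, nonsing_inv_mul_cancel_left _ _ hG]
    _ = B := by rw [h, ← Matrix.mul_assoc Lᵀ, nonsing_inv_mul_cancel_left _ _ hG]

theorem mul_transpose_right_cancel_of_rank_eq_card (hL : L.rank = Fintype.card n)
    {A B : Matrix o n K} (h : A * Lᵀ = B * Lᵀ) : A = B := by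
  apply transpose_injective
  apply mul_left_cancel_of_rank_eq_card hL
  rw [← transpose_transpose L, ← transpose_mul, ← transpose_mul, h]

theorem exists_mul_eq_of_mul_transpose_eq (hL : L.rank = Fintype.card n)
    (hL' : L'.rank = Fintype.card n) (h : L * Lᵀ = L' * L'ᵀ) :
    ∃ M : Matrix n n K, L * M = L' ∧ M * Mᵀ = 1 := by
  have hG : IsUnit (Lᵀ * L).det := (isUnit_iff_isUnit_det _).mp <|
    isUnit_of_rank_eq_card (by rw [rank_transpose_mul_self, hL])
  -- the least-squares solution of `L * M = L'`
  set M := (Lᵀ * L)⁻¹ * Lᵀ * L'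
  have hLM : L * M = L' := by
    refine mul_transpose_right_cancel_of_rank_eq_card hL' ?_
    calc L * M * L'ᵀ = L * ((Lᵀ * L)⁻¹ * (Lᵀ * (L' * L'ᵀ))) := by
          simp only [M, Matrix.mul_assoc]
      _ = L * Lᵀ := by
          rw [← h, ← Matrix.mul_assoc Lᵀ, nonsing_inv_mul_cancel_left _ _ hG]
      _ = L' * L'ᵀ := h
  refine ⟨M, hLM, mul_left_cancel_of_rank_eq_card hL <|
    mul_transpose_right_cancel_of_rank_eq_card hL ?_⟩
  calc L * (M * Mᵀ) * Lᵀ = (L * M) * (L * M)ᵀ := by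
        simp only [transpose_mul, Matrix.mul_assoc]
    _ = L * (1 : Matrix n n K) * Lᵀ := by rw [hLM, ← h, Matrix.mul_one]

end FullColumnRank

theorem exists_ne_zero_of_mul_transpose_eq_one [DecidableEq m] [Ring K] [Nontrivial K]
    {M : Matrix m n K} (hM : M * Mᵀ = 1) (i : m) : ∃ j, M i j ≠ 0 := by
  by_contra! h0
  simpa [mul_apply, h0] using congr_fun₂ hM i i

theorem eq_permMatrix_mul_diagonal_of_transpose_mul_eq_one [DecidableEq n] [Ring K]
    [NoZeroDivisors K] {M : Matrix n n K} (hM : Mᵀ * M = 1) (τ : Equiv.Perm n)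
    (hτ : ∀ i j, M i j ≠ 0 → τ i = j) :
    ∃ ε : n → K, (∀ j, ε j = 1 ∨ ε j = -1) ∧ M = τ.permMatrix K * diagonal ε := by
  have hcol (i j : n) (hij : τ i ≠ j) : M i j = 0 := by
    by_contra h
    exact hij (hτ i j h)
  refine ⟨fun j => M (τ.symm j) j, fun j => mul_self_eq_one_iff.mp ?_, ?_⟩
  · rw [← one_apply_eq (α := K) j, ← hM, mul_apply, Finset.sum_eq_single (τ.symm j)]
    · rfl
    · intro i _ hi
      rw [hcol i j (fun h => hi (by simp [← h])), mul_zero]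
    · simp
  · ext i j
    by_cases hij : τ i = j
    · subst hij
      simp
    · simp [hcol i j hij, hij]

theorem exists_perm_eq_of_ne_zero [Zero K] {ℓ ℓ' : n → m} (hℓ : Function.Injective ℓ)
    (hℓ' : Function.Injective ℓ') {M : Matrix n n K} (hrow : ∀ i, ∃ j, M i j ≠ 0)
    (h : ∀ i j, M i j ≠ 0 → ℓ i = ℓ' j) : ∃ τ : Equiv.Perm n, ∀ i j, M i j ≠ 0 → τ i = j := by
  choose f hf using hrow
  have hfℓ (i : n) : ℓ' (f i) = ℓ i := (h i (f i) (hf i)).symm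
  have hf : Function.Injective f := fun i i' e => hℓ (by rw [← hfℓ, ← hfℓ, e])
  refine ⟨Equiv.ofBijective f hf.bijective_of_finite, fun i j hij => hℓ' ?_⟩
  simp [hfℓ, h i j hij]

variable [LinearOrder m]

def IsPivotMap [Zero K] (L : Matrix m n K) (ℓ : n → m) : Prop :=
  ∀ p, L (ℓ p) p ≠ 0 ∧ ∀ q, q < ℓ p → L q p = 0

namespace IsPivotMap

variable [Ring K] [NoZeroDivisors K] {L L' : Matrix m n K} {ℓ ℓ' : n → m}

theorem mul_apply_ne_zero (hL : IsPivotMap L ℓ) (hℓ : Function.Injective ℓ) {M : Matrix n o K}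
    {j₀ : n} {p : o} (hj₀ : M j₀ p ≠ 0) (hmin : ∀ j, M j p ≠ 0 → ℓ j₀ ≤ ℓ j) :
    (L * M) (ℓ j₀) p ≠ 0 := by
  rw [mul_apply, Finset.sum_eq_single j₀]
  · exact mul_ne_zero (hL j₀).1 hj₀
  · intro j _ hj
    by_cases hMj : M j p = 0
    · rw [hMj, mul_zero]
    · have hlt : ℓ j₀ < ℓ j := (hmin j hMj).lt_of_ne (hℓ.ne (Ne.symm hj))
      rw [(hL j).2 _ hlt, zero_mul]
  · simp

theorem le_of_mul_apply_eq_zero (hL : IsPivotMap L ℓ) (hℓ : Function.Injective ℓ)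
    {M : Matrix n o K} {p : o} {r : m} (hzero : ∀ q, q < r → (L * M) q p = 0)
    {j : n} (hj : M j p ≠ 0) : r ≤ ℓ j := by
  classical
  obtain ⟨j₀, hj₀, hmin⟩ := (Finset.univ.filter fun j => M j p ≠ 0).exists_min_image ℓ
    ⟨j, by simpa using hj⟩
  simp only [Finset.mem_filter, Finset.mem_univ, true_and] at hj₀ hmin
  refine le_trans ?_ (hmin j hj)
  by_contra! hlt
  exact hL.mul_apply_ne_zero hℓ hj₀ hmin (hzero _ hlt)

theorem eq_of_mul_eq (hL : IsPivotMap L ℓ) (hL' : IsPivotMap L' ℓ') (hℓ : Function.Injective ℓ)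
    (hℓ' : Function.Injective ℓ') {M : Matrix n n K} (hLM : L * M = L') (hL'M : L' * Mᵀ = L)
    {i j : n} (hij : M i j ≠ 0) : ℓ i = ℓ' j := by
  refine le_antisymm ?_ ?_
  · exact hL'.le_of_mul_apply_eq_zero hℓ' (M := Mᵀ) (fun q hq => hL'M ▸ (hL i).2 q hq) hij
  · exact hL.le_of_mul_apply_eq_zero hℓ (fun q hq => hLM ▸ (hL' j).2 q hq) hij

end IsPivotMap

end Matrix

/-- Suppose `L` and `L'` are `Q × P` matrices of full column rank with UGLT structures,
and `L Lᵀ = L' L'ᵀ`. Then there exist a `P × P` permutation matrix and a diagonal sign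
matrix (diagonal entries `±1`) such that `L' = L * P_per * P_sign`. -/
theorem stmt_15 {Q P : ℕ} (L L' : Matrix (Fin Q) (Fin P) ℝ)
    (hrank : L.rank = P) (hrank' : L'.rank = P)
    (hU : IsUGLT L) (hU' : IsUGLT L')
    (heq : L * Lᵀ = L' * L'ᵀ) :
    ∃ (σ : Equiv.Perm (Fin P)) (ε : Fin P → ℝ),
      (∀ p, ε p = 1 ∨ ε p = -1) ∧
      L' = L * (σ.permMatrix ℝ) * Matrix.diagonal ε := by
  obtain ⟨ℓ, hℓ, hpiv⟩ := hU
  obtain ⟨ℓ', hℓ', hpiv'⟩ := hU'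
  obtain ⟨M, hLM, hM⟩ := exists_mul_eq_of_mul_transpose_eq
    (hrank.trans (Fintype.card_fin P).symm) (hrank'.trans (Fintype.card_fin P).symm) heq
  have hL'M : L' * Mᵀ = L := by rw [← hLM, Matrix.mul_assoc, hM, Matrix.mul_one]
  obtain ⟨τ, hτ⟩ := exists_perm_eq_of_ne_zero hℓ hℓ' (exists_ne_zero_of_mul_transpose_eq_one hM)
    fun i j hij => IsPivotMap.eq_of_mul_eq hpiv hpiv' hℓ hℓ' hLM hL'M hij
  obtain ⟨ε, hε, rfl⟩ :=
    eq_permMatrix_mul_diagonal_of_transpose_mul_eq_one (mul_eq_one_comm.mp hM) τ hτ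
  exact ⟨τ, ε, hε, by rw [← hLM, Matrix.mul_assoc]⟩
end
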